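/- arXiv:1305.7319 — 2 statements merged into one kernel-verified Lean document; each statement's English description precedes it below -/
import Mathlib

section
/- Let G = (V,E) be a finite simple graph with node weights w ∈ ℝ_+^V and edge weights satisfying w_{ij} ≥ max{w_i, w_j} for all edges ij ∈ E. Then for any node i ∈ V, rk_H(G,w) ≤ max{rk_H(G−i,w) + 1, rk_H(G⊖i,w) + 1, 3}, where G−i is the graph obtained by deleting node i and G⊖i is the graph obtained by deleting i together with all its neighbours (the node and edge weights of the subgraphs being the restrictions of those of G). -/
open MvPolynomial Finset

noncomputable def handTerm {V : Type*} [DecidableEq V] (T I : Finset V) : MvPolynomial V ℝ :=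
  (∏ i ∈ I, X i) * ∏ j ∈ T \ I, (1 - X j)

def InHandelman {V : Type*} [Fintype V] [DecidableEq V] (t : ℕ)
    (p : MvPolynomial V ℝ) : Prop :=
  ∃ c : Finset V → Finset V → ℝ,
    (∀ T I, 0 ≤ c T I) ∧
    p = ∑ T ∈ Finset.univ.filter (fun T : Finset V => T.card ≤ t),
          ∑ I ∈ T.powerset, C (c T I) * handTerm T I

open Classical in
noncomputable def pGW {V : Type*} [Fintype V] (G : SimpleGraph V)
    (w : V → ℝ) (W : V → V → ℝ) : MvPolynomial V ℝ :=
  (∑ i, C (w i) * X i) -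
    C (2⁻¹ : ℝ) * ∑ q ∈ Finset.univ.filter (fun q : V × V => G.Adj q.1 q.2),
      C (W q.1 q.2) * (X q.1 * X q.2)

noncomputable def alphaW {V : Type*} (G : SimpleGraph V) (w : V → ℝ) : ℝ :=
  sSup {v : ℝ | ∃ S : Finset V, (∀ i ∈ S, ∀ j ∈ S, ¬ G.Adj i j) ∧ v = ∑ i ∈ S, w i}

/-!
Fix a node `i` and write `x = x_i`. Sorting the monomials of `p_{G,w}` by whether they involve `i`
or a neighbour of `i` gives the polynomial identity
`f_G = (1 - x) f_{G-i} + x f_{G⊖i} + (α(G) - α(G-i)) (1 - x) + (α(G) - α(G⊖i) - w_i) x`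
`      + ∑_{j ~ i} ((w_ij + w_ji)/2 - w_j) x x_j + (1/2) x ∑_{ab} w_ab x_a x_b`,
the last sum running over the ordered edges `ab` of `G - i` with an endpoint adjacent to `i`.
Multiplying a Handelman certificate in the other variables by `x` or by `1 - x` raises its degree
by one. The remaining terms are Handelman terms of degree at most 3 with nonnegative
coefficients: stable sets of `G - i`, and of `G ⊖ i` together with `i`, are stable in `G`, and
`w_ab ≥ max (w_a, w_b) ≥ 0`.
-/

section HandelmanCone

variable {V : Type*} [DecidableEq V]

lemma handTerm_singleton_empty (i : V) : handTerm {i} ∅ = 1 - X i := by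
  simp [handTerm]

lemma handTerm_singleton_self (i : V) : handTerm {i} {i} = X i := by
  simp [handTerm]

lemma handTerm_self (T : Finset V) : handTerm T T = ∏ j ∈ T, X j := by
  simp [handTerm]

lemma rename_handTerm {V' : Type*} [DecidableEq V'] (e : V' ↪ V) (T I : Finset V') :
    rename e (handTerm T I) = handTerm (T.map e) (I.map e) := by
  simp only [handTerm, map_mul, map_prod, map_sub, map_one, rename_X, ← Finset.map_sdiff,
    prod_map]

lemma handTerm_mul_handTerm {T T' I I' : Finset V} (hT : Disjoint T T') (hI : I ⊆ T)
    (hI' : I' ⊆ T') : handTerm T I * handTerm T' I' = handTerm (T ∪ T') (I ∪ I') := by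
  have hsdiff : (T ∪ T') \ (I ∪ I') = T \ I ∪ T' \ I' := by
    ext x
    have hx : x ∈ T → x ∉ T' := fun h => disjoint_left.1 hT h
    have hIx := @hI x
    have hI'x := @hI' x
    simp only [mem_union, mem_sdiff]
    tauto
  rw [handTerm, handTerm, handTerm, hsdiff, prod_union (hT.mono hI hI'),
    prod_union (hT.mono sdiff_subset sdiff_subset)]
  ring

variable (V) in
noncomputable def handelmanCone (t : ℕ) : AddSubmonoid (MvPolynomial V ℝ) :=
  AddSubmonoid.closure
    {p | ∃ (c : ℝ) (T I : Finset V), 0 ≤ c ∧ I ⊆ T ∧ #T ≤ t ∧ p = C c * handTerm T I}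

lemma C_mul_handTerm_mem_handelmanCone {t : ℕ} {c : ℝ} {T I : Finset V} (hc : 0 ≤ c)
    (hI : I ⊆ T) (hT : #T ≤ t) : C c * handTerm T I ∈ handelmanCone V t :=
  AddSubmonoid.subset_closure ⟨c, T, I, hc, hI, hT, rfl⟩

lemma inHandelman_iff_mem_handelmanCone [Fintype V] {t : ℕ} {p : MvPolynomial V ℝ} :
    InHandelman t p ↔ p ∈ handelmanCone V t := by
  constructor
  · rintro ⟨c, hc, rfl⟩
    exact sum_mem fun T hT => sum_mem fun I hI =>
      C_mul_handTerm_mem_handelmanCone (hc T I) (mem_powerset.1 hI) (mem_filter.1 hT).2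
  · intro hp
    induction hp using AddSubmonoid.closure_induction with
    | mem p hp =>
      obtain ⟨c, T, I, hc, hI, hT, rfl⟩ := hp
      refine ⟨fun T' I' => if T' = T ∧ I' = I then c else 0,
        fun _ _ => ite_nonneg hc le_rfl, ?_⟩
      rw [sum_eq_single_of_mem T (by simpa using hT) fun T' _ hT' => by simp [hT'],
        sum_eq_single_of_mem I (by simpa using hI) fun I' _ hI' => by simp [hI']]
      simp
    | zero => exact ⟨fun _ _ => 0, fun _ _ => le_rfl, by simp⟩
    | add p q _ _ hp hq =>
      obtain ⟨c, hc, rfl⟩ := hp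
      obtain ⟨d, hd, rfl⟩ := hq
      refine ⟨c + d, fun T I => add_nonneg (hc T I) (hd T I), ?_⟩
      simp only [Pi.add_apply, map_add, add_mul, sum_add_distrib]

lemma handelmanCone_mono {t t' : ℕ} (h : t ≤ t') : handelmanCone V t ≤ handelmanCone V t' :=
  AddSubmonoid.closure_mono fun _ ⟨c, T, I, hc, hI, hT, hp⟩ => ⟨c, T, I, hc, hI, hT.trans h, hp⟩

lemma C_mul_mem_handelmanCone {t : ℕ} {c : ℝ} {p : MvPolynomial V ℝ} (hc : 0 ≤ c)
    (hp : p ∈ handelmanCone V t) : C c * p ∈ handelmanCone V t := by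
  induction hp using AddSubmonoid.closure_induction with
  | mem p hp =>
    obtain ⟨c', T, I, hc', hI, hT, rfl⟩ := hp
    rw [← mul_assoc, ← map_mul]
    exact C_mul_handTerm_mem_handelmanCone (mul_nonneg hc hc') hI hT
  | zero => simp
  | add p q _ _ hp hq => simpa [mul_add] using add_mem hp hq

lemma handTerm_mul_rename_mem_handelmanCone {V' : Type*} [DecidableEq V'] {f : V' → V}
    (hf : Function.Injective f) {U J : Finset V} (hJ : J ⊆ U) (hU : ∀ x, f x ∉ U) {t : ℕ}
    {q : MvPolynomial V' ℝ} (hq : q ∈ handelmanCone V' t) :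
    handTerm U J * rename f q ∈ handelmanCone V (#U + t) := by
  induction hq using AddSubmonoid.closure_induction with
  | mem q hq =>
    obtain ⟨c, T, I, hc, hI, hT, rfl⟩ := hq
    let e : V' ↪ V := ⟨f, hf⟩
    have hdisj : Disjoint U (T.map e) :=
      disjoint_left.2 fun {x} hx hx' => by
        obtain ⟨y, -, rfl⟩ := mem_map.1 hx'
        exact hU y hx
    have hcard : #(U ∪ T.map e) ≤ #U + t :=
      (card_union_le _ _).trans (by rw [card_map]; omega)
    rw [map_mul, rename_C, show rename f = rename e from rfl, rename_handTerm, mul_left_comm,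
      handTerm_mul_handTerm hdisj hJ (map_subset_map.2 hI)]
    exact C_mul_handTerm_mem_handelmanCone hc (union_subset_union hJ (map_subset_map.2 hI)) hcard
  | zero => simp
  | add p q _ _ hp hq => simpa [mul_add] using add_mem hp hq

end HandelmanCone

section StableSets

variable {V : Type*} (G : SimpleGraph V) (w : V → ℝ)

lemma sum_le_alphaW [Fintype V] {S : Finset V} (hS : ∀ a ∈ S, ∀ b ∈ S, ¬ G.Adj a b) :
    ∑ a ∈ S, w a ≤ alphaW G w := by
  classical
  refine le_csSup ((univ.powerset.image fun S : Finset V => ∑ a ∈ S, w a).finite_toSet.bddAbove.mono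
    ?_) ⟨S, hS, rfl⟩
  rintro _ ⟨S', -, rfl⟩
  simp

lemma alphaW_le {B : ℝ}
    (h : ∀ S : Finset V, (∀ a ∈ S, ∀ b ∈ S, ¬ G.Adj a b) → ∑ a ∈ S, w a ≤ B) :
    alphaW G w ≤ B :=
  csSup_le ⟨0, ∅, by simp⟩ fun _ ⟨S, hS, hv⟩ => hv ▸ h S hS

lemma alphaW_induce_add_sum_le [Fintype V] [DecidableEq V] (s A : Finset V)
    (hA : ∀ a ∈ A, ∀ b ∈ A, ¬ G.Adj a b) (hAs : ∀ a ∈ A, a ∉ s ∧ ∀ b ∈ s, ¬ G.Adj a b) :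
    alphaW (G.induce (↑s : Set V)) (fun j => w ↑j) + ∑ a ∈ A, w a ≤ alphaW G w := by
  rw [← le_sub_iff_add_le]
  refine alphaW_le _ _ fun S hS => le_sub_iff_add_le.2 ?_
  let e : (↑s : Set V) ↪ V := Function.Embedding.subtype _
  have hdisj : Disjoint (S.map e) A := disjoint_right.2 fun {a} ha hmem => by
    obtain ⟨x, -, rfl⟩ := mem_map.1 hmem
    exact (hAs _ ha).1 x.2
  change ∑ x ∈ S, w (e x) + _ ≤ _
  rw [← sum_map S e w, ← sum_union hdisj]
  refine sum_le_alphaW G w fun a ha b hb => ?_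
  rcases mem_union.1 ha with ha | ha <;> rcases mem_union.1 hb with hb | hb
  · obtain ⟨x, hx, rfl⟩ := mem_map.1 ha
    obtain ⟨y, hy, rfl⟩ := mem_map.1 hb
    exact hS x hx y hy
  · obtain ⟨x, -, rfl⟩ := mem_map.1 ha
    exact fun h => (hAs b hb).2 _ x.2 h.symm
  · obtain ⟨y, -, rfl⟩ := mem_map.1 hb
    exact (hAs a ha).2 _ y.2
  · exact hA a ha b hb

end StableSets

section Decomposition

variable {V : Type*} (G : SimpleGraph V) (w : V → ℝ) (W : V → V → ℝ)

open Classical in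
noncomputable def edgeTerm (q : V × V) : MvPolynomial V ℝ :=
  if G.Adj q.1 q.2 then C (W q.1 q.2) * (X q.1 * X q.2) else 0

lemma pGW_eq_sum [Fintype V] :
    pGW G w W = ∑ v, C (w v) * X v - C 2⁻¹ * ∑ q : V × V, edgeTerm G W q := by
  rw [pGW, sum_filter]
  rfl

lemma rename_pGW_induce (s : Finset V) :
    rename Subtype.val (pGW (G.induce (↑s : Set V)) (fun j => w ↑j) (fun a b => W ↑a ↑b)) =
      ∑ v ∈ s, C (w v) * X v - C 2⁻¹ * ∑ q ∈ s ×ˢ s, edgeTerm G W q := by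
  rw [pGW_eq_sum, map_sub, map_mul, rename_C, map_sum, map_sum, sum_product,
    ← sum_finset_coe _ s, Fintype.sum_prod_type, ← sum_finset_coe _ s]
  congr 2
  · simp
  · refine sum_congr rfl fun a _ => ?_
    rw [← sum_finset_coe _ s]
    refine sum_congr rfl fun b _ => ?_
    by_cases h : G.Adj a b <;> simp [edgeTerm, h]

lemma sum_prod_eq_sum_erase_prod_add [Fintype V] [DecidableEq V] {M : Type*}
    [AddCommMonoid M] (f : V × V → M) (i : V) (hf : f (i, i) = 0) :
    ∑ q, f q = ∑ q ∈ univ.erase i ×ˢ univ.erase i, f q + ∑ j, (f (i, j) + f (j, i)) := by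
  have hrow (a : V) : ∑ b, f (a, b) = f (a, i) + ∑ b ∈ univ.erase i, f (a, b) :=
    (add_sum_erase _ _ (mem_univ i)).symm
  rw [Fintype.sum_prod_type, ← add_sum_erase _ _ (mem_univ i), sum_product,
    sum_congr rfl fun a _ => hrow a, sum_add_distrib, sum_erase (f := fun a => f (a, i)) _ hf,
    sum_add_distrib]
  abel

lemma sum_erase_eq_sum_filter_add_sum_neighborFinset [Fintype V] [DecidableEq V]
    [DecidableRel G.Adj] {M : Type*} [AddCommMonoid M] (f : V → M) (i : V) :
    ∑ j ∈ univ.erase i, f j =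
      ∑ j ∈ univ.filter (fun j => j ≠ i ∧ ¬ G.Adj i j), f j + ∑ j ∈ G.neighborFinset i, f j := by
  rw [← sum_union]
  · congr 1
    ext j
    have hne := G.ne_of_adj (a := i) (b := j)
    simp only [mem_erase, mem_univ, and_true, mem_union, mem_filter, true_and,
      SimpleGraph.mem_neighborFinset]
    tauto
  · simp [disjoint_left]

lemma sum_edgeTerm_incident [Fintype V] [DecidableRel G.Adj] (i : V) :
    ∑ j, (edgeTerm G W (i, j) + edgeTerm G W (j, i)) =
      ∑ j ∈ G.neighborFinset i, C (W i j + W j i) * (X i * X j) := by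
  refine (sum_subset (subset_univ _) fun j _ hj => ?_).symm.trans (sum_congr rfl fun j hj => ?_)
  · have h : ¬ G.Adj i j := by simpa using hj
    simp [edgeTerm, h, G.adj_comm j i]
  · have h : G.Adj i j := by simpa using hj
    simp only [edgeTerm, h, h.symm, if_true, map_add]
    ring

lemma sub_pGW_eq [Fintype V] [DecidableEq V] [DecidableRel G.Adj] (i : V) (c c₁ c₂ : ℝ) :
    C c - pGW G w W =
      (1 - X i) * rename Subtype.val (C c₁ - pGW (G.induce (↑(univ.erase i) : Set V))
          (fun j => w ↑j) (fun a b => W ↑a ↑b)) +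
        X i * rename Subtype.val
          (C c₂ - pGW (G.induce (↑(univ.filter fun j => j ≠ i ∧ ¬ G.Adj i j) : Set V))
            (fun j => w ↑j) (fun a b => W ↑a ↑b)) +
        C (c - c₁) * (1 - X i) + C (c - c₂ - w i) * X i +
        ∑ j ∈ G.neighborFinset i, C (2⁻¹ * (W i j + W j i) - w j) * (X i * X j) +
        C 2⁻¹ * (X i * ∑ q ∈ univ.erase i ×ˢ univ.erase i \
          (univ.filter fun j => j ≠ i ∧ ¬ G.Adj i j) ×ˢ
            (univ.filter fun j => j ≠ i ∧ ¬ G.Adj i j), edgeTerm G W q) := by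
  set U := univ.erase i
  set S := univ.filter fun j => j ≠ i ∧ ¬ G.Adj i j
  set N := G.neighborFinset i
  have hSU : S ⊆ U := fun j hj => mem_erase.2 ⟨(mem_filter.1 hj).2.1, mem_univ j⟩
  have hnodes : ∑ v, C (w v) * X v = C (w i) * X i + ∑ v ∈ U, C (w v) * X v :=
    (add_sum_erase _ _ (mem_univ i)).symm
  have hnodesU := sum_erase_eq_sum_filter_add_sum_neighborFinset G (fun v => C (w v) * X v) i
  have hedges := sum_prod_eq_sum_erase_prod_add (edgeTerm G W) i (by simp [edgeTerm])
  rw [sum_edgeTerm_incident] at hedges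
  have hedgesU := sum_sdiff (f := edgeTerm G W) (product_subset_product hSU hSU)
  have hincident : ∑ j ∈ N, C (2⁻¹ * (W i j + W j i) - w j) * (X i * X j) =
      C 2⁻¹ * ∑ j ∈ N, C (W i j + W j i) * (X i * X j) - X i * ∑ j ∈ N, C (w j) * X j := by
    rw [mul_sum, mul_sum, ← sum_sub_distrib]
    refine sum_congr rfl fun j _ => ?_
    simp only [map_sub, map_mul]
    ring
  rw [pGW_eq_sum, map_sub, map_sub, rename_C, rename_C, rename_pGW_induce, rename_pGW_induce,
    hincident, map_sub, map_sub, map_sub]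
  linear_combination -hnodes + C 2⁻¹ * hedges - X i * hnodesU - C 2⁻¹ * X i * hedgesU

end Decomposition

section Certificate
variable {V : Type*} [DecidableEq V] (G : SimpleGraph V) (w : V → ℝ) (W : V → V → ℝ)

lemma C_mul_X_mul_X_mem_handelmanCone {i j : V} (hij : i ≠ j) {c : ℝ} (hc : 0 ≤ c) :
    C c * (X i * X j) ∈ handelmanCone V 3 := by
  rw [← prod_pair hij, ← handTerm_self]
  exact C_mul_handTerm_mem_handelmanCone hc subset_rfl (card_le_two.trans (by norm_num))

lemma X_mul_edgeTerm_mem_handelmanCone {i : V} {q : V × V} (h₁ : q.1 ≠ i) (h₂ : q.2 ≠ i)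
    (hW : G.Adj q.1 q.2 → 0 ≤ W q.1 q.2) : X i * edgeTerm G W q ∈ handelmanCone V 3 := by
  obtain ⟨a, b⟩ := q
  unfold edgeTerm
  split_ifs with h
  · have hterm : X i * (C (W a b) * (X a * X b)) = C (W a b) * handTerm {i, a, b} {i, a, b} := by
      rw [handTerm_self, prod_insert (by simp [h₁.symm, h₂.symm]), prod_pair (G.ne_of_adj h)]
      ring
    rw [hterm]
    exact C_mul_handTerm_mem_handelmanCone (hW h) subset_rfl card_le_three
  · simp

lemma sub_pGW_mem_handelmanCone [Fintype V] [DecidableRel G.Adj] (hw : ∀ v, 0 ≤ w v)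
    (hW : ∀ i j, G.Adj i j → max (w i) (w j) ≤ W i j) (i : V) {c c₁ c₂ : ℝ} {t₁ t₂ : ℕ}
    (h₁ : C c₁ - pGW (G.induce (↑(univ.erase i) : Set V)) (fun j => w ↑j)
      (fun a b => W ↑a ↑b) ∈ handelmanCone _ t₁)
    (h₂ : C c₂ - pGW (G.induce (↑(univ.filter fun j => j ≠ i ∧ ¬ G.Adj i j) : Set V))
      (fun j => w ↑j) (fun a b => W ↑a ↑b) ∈ handelmanCone _ t₂)
    (hc₁ : c₁ ≤ c) (hc₂ : c₂ + w i ≤ c) :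
    C c - pGW G w W ∈ handelmanCone V (max (max (t₁ + 1) (t₂ + 1)) 3) := by
  have h3 : 3 ≤ max (max (t₁ + 1) (t₂ + 1)) 3 := le_max_right _ _
  rw [sub_pGW_eq G w W i c c₁ c₂]
  refine add_mem (add_mem (add_mem (add_mem (add_mem ?_ ?_) ?_) ?_) ?_) ?_
  · rw [← handTerm_singleton_empty]
    refine handelmanCone_mono ?_ (handTerm_mul_rename_mem_handelmanCone Subtype.val_injective
      (empty_subset _) (fun x => by simpa using x.2) h₁)
    simp [add_comm]
  · rw [← handTerm_singleton_self]
    refine handelmanCone_mono ?_ (handTerm_mul_rename_mem_handelmanCone Subtype.val_injective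
      subset_rfl (fun x => by simpa using (mem_filter.1 x.2).2.1) h₂)
    simp [add_comm]
  · rw [← handTerm_singleton_empty]
    exact handelmanCone_mono h3
      (C_mul_handTerm_mem_handelmanCone (sub_nonneg.2 hc₁) (empty_subset _) (by simp))
  · rw [← handTerm_singleton_self]
    exact handelmanCone_mono h3
      (C_mul_handTerm_mem_handelmanCone (by linarith) subset_rfl (by simp))
  · refine handelmanCone_mono h3 (sum_mem fun j hj => ?_)
    have hij : G.Adj i j := (G.mem_neighborFinset i j).1 hj
    exact C_mul_X_mul_X_mem_handelmanCone (G.ne_of_adj hij) (by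
      linarith [hW i j hij, hW j i hij.symm, le_max_right (w i) (w j), le_max_left (w j) (w i)])
  · refine handelmanCone_mono h3 (C_mul_mem_handelmanCone (by norm_num) ?_)
    rw [mul_sum]
    refine sum_mem fun q hq => X_mul_edgeTerm_mem_handelmanCone G W ?_ ?_ fun h => ?_
    · exact (mem_erase.1 (mem_product.1 (mem_sdiff.1 hq).1).1).1
    · exact (mem_erase.1 (mem_product.1 (mem_sdiff.1 hq).1).2).1
    · exact (hw _).trans ((le_max_left _ _).trans (hW _ _ h))

end Certificate

theorem handelman_rank_delete_node_general {V : Type*} [Fintype V] [DecidableEq V]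
    (G : SimpleGraph V) [DecidableRel G.Adj]
    (w : V → ℝ) (W : V → V → ℝ) (hw : ∀ v, 0 ≤ w v)
    (hW : ∀ i j, G.Adj i j → max (w i) (w j) ≤ W i j)
    (i : V) (t₁ t₂ : ℕ)
    (h₁ : InHandelman t₁
      (C (alphaW (G.induce (↑(Finset.univ.erase i) : Set V))
            (fun j => w ↑j)) -
        pGW (G.induce (↑(Finset.univ.erase i) : Set V))
          (fun j => w ↑j) (fun a b => W ↑a ↑b)))
    (h₂ : InHandelman t₂
      (C (alphaW (G.induce (↑(Finset.univ.filter fun j => j ≠ i ∧ ¬ G.Adj i j) : Set V))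
            (fun j => w ↑j)) -
        pGW (G.induce (↑(Finset.univ.filter fun j => j ≠ i ∧ ¬ G.Adj i j) : Set V))
          (fun j => w ↑j) (fun a b => W ↑a ↑b))) :
    InHandelman (max (max (t₁ + 1) (t₂ + 1)) 3) (C (alphaW G w) - pGW G w W) := by
  rw [inHandelman_iff_mem_handelmanCone] at h₁ h₂ ⊢
  exact sub_pGW_mem_handelmanCone G w W hw hW i h₁ h₂
    (by simpa using alphaW_induce_add_sum_le G w _ ∅ (by simp) (by simp))
    (by simpa using alphaW_induce_add_sum_le G w _ {i} (by simp) (by simp))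

/-- Let `(G,w)` have node weights `w ≥ 0` and edge weights
`w_{ij} ≥ max(w_i,w_j)`, and let `i` be a node.  If `f_{G−i,w} ∈ H_{t₁}` and
`f_{G⊖i,w} ∈ H_{t₂}` (so that `rk_H(G−i,w) ≤ t₁` and `rk_H(G⊖i,w) ≤ t₂`), then
`f_{G,w} ∈ H_{max(t₁+1, t₂+1, 3)}`; hence
`rk_H(G,w) ≤ max(rk_H(G−i,w)+1, rk_H(G⊖i,w)+1, 3)`.  Here `G−i` is the induced subgraph
obtained by deleting node `i`, and `G⊖i` the one obtained by deleting `i` and its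
neighbours, both with the restricted weights. -/
theorem handelman_rank_delete_node {V : Type*} [Fintype V] [DecidableEq V]
    (G : SimpleGraph V) [DecidableRel G.Adj]
    (w : V → ℝ) (W : V → V → ℝ) (hw : ∀ v, 0 ≤ w v)
    (hWs : ∀ i j, W i j = W j i)
    (hW : ∀ i j, G.Adj i j → max (w i) (w j) ≤ W i j)
    (i : V) (t₁ t₂ : ℕ)
    (h₁ : InHandelman t₁
      (C (alphaW (G.induce (↑(Finset.univ.erase i) : Set V))
            (fun j => w ↑j)) -
        pGW (G.induce (↑(Finset.univ.erase i) : Set V))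
          (fun j => w ↑j) (fun a b => W ↑a ↑b)))
    (h₂ : InHandelman t₂
      (C (alphaW (G.induce (↑(Finset.univ.filter fun j => j ≠ i ∧ ¬ G.Adj i j) : Set V))
            (fun j => w ↑j)) -
        pGW (G.induce (↑(Finset.univ.filter fun j => j ≠ i ∧ ¬ G.Adj i j) : Set V))
          (fun j => w ↑j) (fun a b => W ↑a ↑b))) :
    InHandelman (max (max (t₁ + 1) (t₂ + 1)) 3) (C (alphaW G w) - pGW G w W) :=
  handelman_rank_delete_node_general G w W hw hW i t₁ t₂ h₁ h₂
end

section
/- Let G = (V,E) be a finite simple graph with node weights w ∈ ℝ_+^V and edge weights satisfying w_{ij} ≥ max{w_i, w_j} for all edges ij ∈ E. Then the Handelman rank satisfies rk_H(G,w) ≤ |V(G)| − α(G) + 1, where α(G) is the (unweighted) stability number of G. -/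
open MvPolynomial Finset

-- The (unweighted) stability number `α(G)`: the maximum cardinality of a stable set.
open Classical in
noncomputable def alphaNat {V : Type*} [Fintype V] (G : SimpleGraph V) : ℕ :=
  Finset.sup
    (Finset.univ.filter fun S : Finset V => ∀ i ∈ S, ∀ j ∈ S, ¬ G.Adj i j)
    Finset.card

/-! Fix a maximum stable set `S` and put `T = V \ S`, so `|T| = |V| - α(G)`. Since `f_{G,w}` is
multilinear, interpolating it in the variables of `T` writes it as
`∑_{I ⊆ T} h_{T,I} · f(𝟙_I, x_S)` with `h_{T,I} = ∏_{i ∈ I} x_i ∏_{j ∈ T \ I} (1 - x_j)`; as `S`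
is stable, each `f(𝟙_I, x_S)` is affine in `x_S`. An affine function `b + ∑ a_j x_j` is a
nonnegative combination of `1`, the `x_j` and the `1 - x_j` as soon as its minimum over the cube,
`b + ∑ min(a_j, 0)`, is nonnegative, and this costs one more factor. That minimum is
`α(G,w) - p(𝟙_{I ∪ J})` with `J = {j : a_j ≤ 0}`, and `p(𝟙_A) ≤ α(G,w)` for every `A`: deleting
from `A` an endpoint `i` of an edge `ij` loses `w_i` but gains at least `w_{ij} ≥ w_i`. -/

section Handelman

variable {V : Type*} [Fintype V] [DecidableEq V] {t : ℕ}

theorem inHandelman_zero (t : ℕ) : InHandelman t (0 : MvPolynomial V ℝ) :=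
  ⟨fun _ _ => 0, fun _ _ => le_rfl, by simp⟩

theorem InHandelman.add {p q : MvPolynomial V ℝ} (hp : InHandelman t p) (hq : InHandelman t q) :
    InHandelman t (p + q) := by
  obtain ⟨c, hc, rfl⟩ := hp
  obtain ⟨d, hd, rfl⟩ := hq
  exact ⟨c + d, fun T I => add_nonneg (hc T I) (hd T I), by
    simp only [Pi.add_apply, map_add, add_mul, sum_add_distrib]⟩

theorem inHandelman_sum {ι : Type*} (s : Finset ι) (f : ι → MvPolynomial V ℝ)
    (h : ∀ i ∈ s, InHandelman t (f i)) : InHandelman t (∑ i ∈ s, f i) :=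
  sum_induction f _ (fun _ _ => InHandelman.add) (inHandelman_zero t) h

theorem inHandelman_C_mul_handTerm {T I : Finset V} (hI : I ⊆ T) (hT : #T ≤ t) {m : ℝ}
    (hm : 0 ≤ m) : InHandelman t (C m * handTerm T I) := by
  refine ⟨fun T' I' => if T' = T ∧ I' = I then m else 0,
    fun _ _ => ite_nonneg hm le_rfl, ?_⟩
  rw [sum_eq_single_of_mem T (by simp [hT]), sum_eq_single_of_mem I (mem_powerset.2 hI)]
  · simp
  · intro I' _ hne; simp [hne]
  · intro T' _ hne
    exact sum_eq_zero fun I' _ => by simp [hne]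

end Handelman

section HandTerm

variable {V : Type*} [DecidableEq V]

theorem handTerm_insert_insert {T I : Finset V} {j : V} (hj : j ∉ T) (hI : I ⊆ T) :
    handTerm (insert j T) (insert j I) = handTerm T I * X j := by
  rw [handTerm, handTerm, insert_sdiff_insert, sdiff_insert_of_notMem hj,
    prod_insert fun h => hj (hI h)]
  ring

theorem handTerm_insert {T I : Finset V} {j : V} (hj : j ∉ T) (hI : I ⊆ T) :
    handTerm (insert j T) I = handTerm T I * (1 - X j) := by
  rw [handTerm, handTerm, insert_sdiff_of_notMem _ fun h => hj (hI h),
    prod_insert fun h => hj (mem_sdiff.1 h).1]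
  ring

theorem sum_handTerm_superset_eq_prod_X {T D : Finset V} (hD : D ⊆ T) :
    ∑ I ∈ T.powerset with D ⊆ I, handTerm T I = ∏ i ∈ D, X i := by
  have hdrop : ∀ I ⊆ T, ∏ j ∈ T \ I, (if j ∈ D then (0 : MvPolynomial V ℝ) else 1 - X j) =
      if D ⊆ I then ∏ j ∈ T \ I, (1 - X j) else 0 := by
    intro I _
    split_ifs with hDI
    · exact prod_congr rfl fun j hj => if_neg fun hjD => (mem_sdiff.1 hj).2 (hDI hjD)
    · obtain ⟨d, hdD, hdI⟩ := not_subset.1 hDI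
      exact prod_eq_zero (mem_sdiff.2 ⟨hD hdD, hdI⟩) (if_pos hdD)
  calc ∑ I ∈ T.powerset with D ⊆ I, handTerm T I
      = ∑ I ∈ T.powerset, (∏ i ∈ I, X i) * ∏ j ∈ T \ I, (if j ∈ D then 0 else 1 - X j) := by
        rw [sum_filter]
        refine sum_congr rfl fun I hI => ?_
        rw [hdrop I (mem_powerset.1 hI), mul_ite, mul_zero, handTerm]
    _ = ∏ j ∈ T, (X j + if j ∈ D then 0 else 1 - X j) := (prod_add _ _ T).symm
    _ = ∏ j ∈ T, (if j ∈ D then X j else 1) :=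
        prod_congr rfl fun j _ => by split_ifs <;> ring
    _ = ∏ i ∈ D, X i := by rw [prod_ite_mem, inter_eq_right.2 hD]

theorem sum_handTerm_mul_sum {T : Finset V} (p : V → MvPolynomial V ℝ) :
    ∑ I ∈ T.powerset, handTerm T I * ∑ i ∈ I, p i = ∑ i ∈ T, X i * p i := by
  simp_rw [mul_sum]
  rw [sum_comm' (t' := T) (s' := fun i => T.powerset.filter ({i} ⊆ ·))]
  · refine sum_congr rfl fun i hi => ?_
    rw [← sum_mul, sum_handTerm_superset_eq_prod_X (singleton_subset_iff.2 hi), prod_singleton]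
  · intro I i
    simp only [mem_filter, mem_powerset, singleton_subset_iff]
    exact ⟨fun h => ⟨⟨h.1, h.2⟩, h.1 h.2⟩, fun h => ⟨h.1.1, h.1.2⟩⟩

theorem sum_handTerm_mul_sum_sum {T : Finset V} (g : V → V → MvPolynomial V ℝ)
    (hg : ∀ a, g a a = 0) :
    ∑ I ∈ T.powerset, handTerm T I * ∑ a ∈ I, ∑ b ∈ I, g a b =
      ∑ a ∈ T, ∑ b ∈ T, X a * X b * g a b := by
  have hind : ∀ I ∈ T.powerset, ∑ a ∈ I, ∑ b ∈ I, g a b =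
      ∑ a ∈ T, ∑ b ∈ T, if {a, b} ⊆ I then g a b else 0 := by
    intro I hI
    simp [insert_subset_iff, ite_and, sum_ite_mem, inter_eq_right.2 (mem_powerset.1 hI)]
  rw [sum_congr rfl fun I hI => congrArg (handTerm T I * ·) (hind I hI)]
  simp_rw [mul_sum]
  rw [sum_comm]
  refine sum_congr rfl fun a ha => ?_
  rw [sum_comm]
  refine sum_congr rfl fun b hb => ?_
  simp_rw [mul_ite, mul_zero]
  rw [← sum_filter, ← sum_mul,
    sum_handTerm_superset_eq_prod_X (insert_subset ha (singleton_subset_iff.2 hb))]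
  by_cases hab : a = b
  · simp [hab, hg]
  · rw [prod_pair hab]

end HandTerm

section Certificate

variable {V : Type*} [Fintype V] [DecidableEq V] {t : ℕ}

theorem inHandelman_handTerm_mul_affine {T I S : Finset V} (hI : I ⊆ T) (hST : Disjoint S T)
    (ht : #T + 1 ≤ t) (b : ℝ) (a : V → ℝ) (hb : 0 ≤ b + ∑ j ∈ S, min (a j) 0) :
    InHandelman t (handTerm T I * (C b + ∑ j ∈ S, C (a j) * X j)) := by
  have hjT : ∀ j ∈ S, j ∉ T := fun j hj => disjoint_left.1 hST hj
  have hcard : ∀ j ∈ S, #(insert j T) ≤ t := fun j hj => by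
    rw [card_insert_of_notMem (hjT j hj)]; exact ht
  -- `a x = max a 0 * x + (-min a 0) * (1 - x) + min a 0`
  have hterm : ∀ j ∈ S, C (max (a j) 0) * handTerm (insert j T) (insert j I) +
      C (-min (a j) 0) * handTerm (insert j T) I =
        handTerm T I * (C (a j) * X j) - C (min (a j) 0) * handTerm T I := by
    intro j hj
    have hC := congrArg (C (σ := V)) (min_add_max (a j) 0)
    rw [map_add, add_zero] at hC
    rw [handTerm_insert_insert (hjT j hj) hI, handTerm_insert (hjT j hj) hI, map_neg]
    linear_combination (handTerm T I * X j) * hC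
  have hsplit : handTerm T I * (C b + ∑ j ∈ S, C (a j) * X j) =
      C (b + ∑ j ∈ S, min (a j) 0) * handTerm T I +
        ∑ j ∈ S, (C (max (a j) 0) * handTerm (insert j T) (insert j I) +
          C (-min (a j) 0) * handTerm (insert j T) I) := by
    rw [sum_congr rfl hterm, sum_sub_distrib, ← mul_sum, ← sum_mul, map_add, map_sum]
    ring
  rw [hsplit]
  refine (inHandelman_C_mul_handTerm hI (by omega) hb).add
    (inHandelman_sum _ _ fun j hj => .add ?_ ?_)
  · exact inHandelman_C_mul_handTerm (insert_subset_insert j hI) (hcard j hj) (le_max_right _ _)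
  · exact inHandelman_C_mul_handTerm (hI.trans (subset_insert j T)) (hcard j hj)
      (neg_nonneg.2 (min_le_right _ _))

end Certificate

section Graph

variable {V : Type*} (G : SimpleGraph V) (w : V → ℝ) (W : V → V → ℝ)

-- `p_{G,w}` sums over ordered adjacent pairs, so it only sees the symmetrization of `W`.
open Classical in
noncomputable def adjWeight (i j : V) : ℝ :=
  if G.Adj i j then (W i j + W j i) / 2 else 0

-- `p_{G,w}` evaluated at the indicator vector of `A`.
noncomputable def pGWInd (A : Finset V) : ℝ :=
  ∑ i ∈ A, w i - 2⁻¹ * ∑ a ∈ A, ∑ b ∈ A, adjWeight G W a b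

variable {G W}

theorem adjWeight_comm (i j : V) : adjWeight G W i j = adjWeight G W j i := by
  rw [adjWeight, adjWeight, G.adj_comm, add_comm]

theorem adjWeight_of_not_adj {i j : V} (h : ¬ G.Adj i j) : adjWeight G W i j = 0 := by
  simp [adjWeight, h]

theorem adjWeight_self (i : V) : adjWeight G W i i = 0 :=
  adjWeight_of_not_adj (G.loopless.irrefl i)

variable {w}

theorem le_adjWeight (hW : ∀ i j, G.Adj i j → max (w i) (w j) ≤ W i j) {i j : V}
    (h : G.Adj i j) : w i ≤ adjWeight G W i j := by
  have h₁ := (le_max_left _ _).trans (hW i j h)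
  have h₂ := (le_max_right _ _).trans (hW j i h.symm)
  rw [adjWeight, if_pos h]
  linarith

theorem adjWeight_nonneg (hw : ∀ v, 0 ≤ w v) (hW : ∀ i j, G.Adj i j → max (w i) (w j) ≤ W i j)
    (i j : V) : 0 ≤ adjWeight G W i j := by
  by_cases h : G.Adj i j
  · exact (hw i).trans (le_adjWeight hW h)
  · rw [adjWeight_of_not_adj h]

theorem pGWInd_eq_sum_of_stable {A : Finset V} (hA : ∀ i ∈ A, ∀ j ∈ A, ¬ G.Adj i j) :
    pGWInd G w W A = ∑ i ∈ A, w i := by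
  rw [pGWInd, sum_eq_zero fun a ha => sum_eq_zero fun b hb => adjWeight_of_not_adj (hA a ha b hb),
    mul_zero, sub_zero]

theorem pGWInd_union [DecidableEq V] {A B : Finset V} (h : Disjoint A B) :
    pGWInd G w W (A ∪ B) =
      pGWInd G w W A + pGWInd G w W B - ∑ a ∈ A, ∑ b ∈ B, adjWeight G W a b := by
  have hcross : ∑ b ∈ B, ∑ a ∈ A, adjWeight G W b a = ∑ a ∈ A, ∑ b ∈ B, adjWeight G W a b := by
    rw [sum_comm]
    simp only [adjWeight_comm]
  simp only [pGWInd, sum_union h, sum_add_distrib, hcross]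
  ring

theorem sum_le_alphaW_s16 [Finite V] {B : Finset V} (hB : ∀ i ∈ B, ∀ j ∈ B, ¬ G.Adj i j) :
    ∑ i ∈ B, w i ≤ alphaW G w := by
  refine le_csSup ((Set.finite_range fun s : Finset V => ∑ i ∈ s, w i).subset ?_).bddAbove
    ⟨B, hB, rfl⟩
  rintro v ⟨s, -, rfl⟩
  exact ⟨s, rfl⟩

theorem pGWInd_le_alphaW [Finite V] [DecidableEq V] (hw : ∀ v, 0 ≤ w v)
    (hW : ∀ i j, G.Adj i j → max (w i) (w j) ≤ W i j) (A : Finset V) :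
    pGWInd G w W A ≤ alphaW G w := by
  induction A using Finset.strongInduction with
  | H A ih =>
    by_cases hA : ∀ i ∈ A, ∀ j ∈ A, ¬ G.Adj i j
    · rw [pGWInd_eq_sum_of_stable hA]
      exact sum_le_alphaW_s16 hA
    push Not at hA
    obtain ⟨i, hi, j, hj, hij⟩ := hA
    have hdrop : pGWInd G w W A ≤ pGWInd G w W (A.erase i) := by
      have hgain : adjWeight G W i j ≤ ∑ b ∈ A.erase i, adjWeight G W i b :=
        single_le_sum (fun b _ => adjWeight_nonneg hw hW i b) (mem_erase.2 ⟨hij.ne', hj⟩)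
      calc pGWInd G w W A = pGWInd G w W ({i} ∪ A.erase i) := by rw [← insert_eq, insert_erase hi]
        _ = w i + pGWInd G w W (A.erase i) - ∑ b ∈ A.erase i, adjWeight G W i b := by
          rw [pGWInd_union (disjoint_singleton_left.2 (notMem_erase i A)),
            pGWInd_eq_sum_of_stable (by simp), sum_singleton, sum_singleton]
        _ ≤ pGWInd G w W (A.erase i) := by linarith [le_adjWeight hW hij]
    exact hdrop.trans (ih _ (erase_ssubset hi))

theorem pGWInd_sub_sum_min_le_alphaW [Finite V] [DecidableEq V] (hw : ∀ v, 0 ≤ w v)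
    (hW : ∀ i j, G.Adj i j → max (w i) (w j) ≤ W i j) {S I : Finset V}
    (hS : ∀ i ∈ S, ∀ j ∈ S, ¬ G.Adj i j) (hIS : Disjoint I S) :
    pGWInd G w W I - ∑ j ∈ S, min (∑ i ∈ I, adjWeight G W i j - w j) 0 ≤ alphaW G w := by
  set J := S.filter fun j => ∑ i ∈ I, adjWeight G W i j - w j ≤ 0
  have hJS : J ⊆ S := filter_subset _ _
  have hmin : ∑ j ∈ S, min (∑ i ∈ I, adjWeight G W i j - w j) 0 =
      ∑ j ∈ J, (∑ i ∈ I, adjWeight G W i j - w j) := by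
    simp only [min_def, J, sum_filter]
  calc pGWInd G w W I - ∑ j ∈ S, min (∑ i ∈ I, adjWeight G W i j - w j) 0
      = pGWInd G w W (I ∪ J) := by
        rw [pGWInd_union (disjoint_of_subset_right hJS hIS),
          pGWInd_eq_sum_of_stable fun i hi j hj => hS i (hJS hi) j (hJS hj), hmin,
          sum_sub_distrib, sum_comm]
        ring
    _ ≤ alphaW G w := pGWInd_le_alphaW hw hW _

end Graph

theorem C_two_inv_mul_two {σ : Type*} : (C 2⁻¹ * 2 : MvPolynomial σ ℝ) = 1 := by
  rw [← map_ofNat C 2, ← map_mul, inv_mul_cancel₀ two_ne_zero, map_one]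

section Identity

variable {V : Type*} [Fintype V] (G : SimpleGraph V) (w : V → ℝ) (W : V → V → ℝ)

open Classical in
theorem pGW_eq :
    pGW G w W = ∑ i, C (w i) * X i - C 2⁻¹ * ∑ a, ∑ b, X a * X b * C (adjWeight G W a b) := by
  set A : (V → V → ℝ) → MvPolynomial V ℝ := fun U =>
    ∑ a, ∑ b, if G.Adj a b then C (U a b) * (X a * X b) else 0 with hA
  have hswap : A (fun a b => W b a) = A W := by
    simp only [hA]
    rw [sum_comm]
    exact sum_congr rfl fun a _ => sum_congr rfl fun b _ => by rw [G.adj_comm, mul_comm (X b)]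
  have hsym : ∑ a, ∑ b, X a * X b * C (adjWeight G W a b) = C 2⁻¹ * (A W + A fun a b => W b a) := by
    simp only [hA, mul_sum, ← sum_add_distrib]
    refine sum_congr rfl fun a _ => sum_congr rfl fun b _ => ?_
    rw [adjWeight]
    split_ifs
    · rw [div_eq_mul_inv, map_mul, map_add]; ring
    · simp
  rw [pGW, sum_filter, Fintype.sum_prod_type, hsym, hswap]
  linear_combination (C 2⁻¹ * A W) * C_two_inv_mul_two

variable {G} {w W}

theorem pGW_eq_of_stable [DecidableEq V] {S : Finset V} (hS : ∀ i ∈ S, ∀ j ∈ S, ¬ G.Adj i j) :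
    pGW G w W = ∑ i ∈ Sᶜ, C (w i) * X i + ∑ j ∈ S, C (w j) * X j -
      C 2⁻¹ * ∑ a ∈ Sᶜ, ∑ b ∈ Sᶜ, X a * X b * C (adjWeight G W a b) -
        ∑ a ∈ Sᶜ, ∑ b ∈ S, X a * X b * C (adjWeight G W a b) := by
  have hcross : ∑ a ∈ S, ∑ b ∈ Sᶜ, X a * X b * C (adjWeight G W a b) =
      ∑ a ∈ Sᶜ, ∑ b ∈ S, X a * X b * C (adjWeight G W a b) := by
    rw [sum_comm]
    exact sum_congr rfl fun a _ => sum_congr rfl fun b _ => by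
      rw [adjWeight_comm b, mul_comm (X b)]
  have hstable : ∑ a ∈ S, ∑ b ∈ S, X a * X b * C (adjWeight G W a b) = 0 :=
    sum_eq_zero fun a ha => sum_eq_zero fun b hb => by
      rw [adjWeight_of_not_adj (hS a ha b hb), map_zero, mul_zero]
  rw [pGW_eq]
  simp only [← sum_compl_add_sum S, sum_add_distrib, hcross, hstable]
  linear_combination -(∑ a ∈ Sᶜ, ∑ b ∈ S, X a * X b * C (adjWeight G W a b)) * C_two_inv_mul_two

theorem C_sub_pGW_eq_sum_handTerm [DecidableEq V] (α : ℝ) {S : Finset V}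
    (hS : ∀ i ∈ S, ∀ j ∈ S, ¬ G.Adj i j) :
    C α - pGW G w W = ∑ I ∈ Sᶜ.powerset, handTerm Sᶜ I *
      (C (α - pGWInd G w W I) + ∑ j ∈ S, C (∑ i ∈ I, adjWeight G W i j - w j) * X j) := by
  have hexpand : ∀ I : Finset V, handTerm Sᶜ I *
      (C (α - pGWInd G w W I) + ∑ j ∈ S, C (∑ i ∈ I, adjWeight G W i j - w j) * X j) =
        (C α - ∑ j ∈ S, C (w j) * X j) * handTerm Sᶜ I -
          handTerm Sᶜ I * ∑ i ∈ I, (C (w i) - ∑ j ∈ S, X j * C (adjWeight G W i j)) +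
            C 2⁻¹ * (handTerm Sᶜ I * ∑ a ∈ I, ∑ b ∈ I, C (adjWeight G W a b)) := by
    intro I
    have hcoeff : C (α - pGWInd G w W I) + ∑ j ∈ S, C (∑ i ∈ I, adjWeight G W i j - w j) * X j =
        (C α - ∑ j ∈ S, C (w j) * X j) -
          ∑ i ∈ I, (C (w i) - ∑ j ∈ S, X j * C (adjWeight G W i j)) +
            C 2⁻¹ * ∑ a ∈ I, ∑ b ∈ I, C (adjWeight G W a b) := by
      simp only [pGWInd, map_sub, map_mul, map_sum, sub_mul, sum_sub_distrib, sum_mul]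
      rw [sum_comm (s := S)]
      simp only [mul_comm (X _)]
      ring
    rw [hcoeff]
    ring
  have hpartition := sum_handTerm_superset_eq_prod_X (empty_subset Sᶜ)
  simp only [empty_subset, filter_true, prod_empty] at hpartition
  rw [sum_congr rfl fun I _ => hexpand I, sum_add_distrib, sum_sub_distrib, ← mul_sum, ← mul_sum,
    hpartition, sum_handTerm_mul_sum, sum_handTerm_mul_sum_sum _ fun a => by
      rw [adjWeight_self, map_zero], pGW_eq_of_stable hS]
  simp only [mul_sub, mul_sum, sum_sub_distrib, mul_comm (X _) (C _), mul_assoc]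
  ring

end Identity

open Classical in
theorem exists_stable_card_eq_alphaNat {V : Type*} [Fintype V] (G : SimpleGraph V) :
    ∃ S : Finset V, (∀ i ∈ S, ∀ j ∈ S, ¬ G.Adj i j) ∧ #S = alphaNat G := by
  obtain ⟨S, hS, hcard⟩ := exists_mem_eq_sup
    (univ.filter fun S : Finset V => ∀ i ∈ S, ∀ j ∈ S, ¬ G.Adj i j) ⟨∅, by simp⟩ card
  exact ⟨S, (mem_filter.1 hS).2, hcard.symm⟩

theorem handelman_rank_upper_bound_general {V : Type*} [Fintype V] [DecidableEq V]
    (G : SimpleGraph V) (w : V → ℝ) (W : V → V → ℝ) (hw : ∀ v, 0 ≤ w v)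
    (hW : ∀ i j, G.Adj i j → max (w i) (w j) ≤ W i j) :
    InHandelman (Fintype.card V - alphaNat G + 1) (C (alphaW G w) - pGW G w W) := by
  obtain ⟨S, hS, hSα⟩ := exists_stable_card_eq_alphaNat G
  have hcard : #Sᶜ + 1 ≤ Fintype.card V - alphaNat G + 1 := by
    rw [card_compl, hSα]
  rw [C_sub_pGW_eq_sum_handTerm _ hS]
  refine inHandelman_sum _ _ fun I hI =>
    inHandelman_handTerm_mul_affine (mem_powerset.1 hI) disjoint_compl_right hcard _ _ ?_
  have := pGWInd_sub_sum_min_le_alphaW hw hW hS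
    (disjoint_of_subset_left (mem_powerset.1 hI) disjoint_compl_left)
  linarith

/-- For node weights `w ≥ 0` and edge weights `w_{ij} ≥ max(w_i,w_j)`,
the Handelman rank satisfies `rk_H(G,w) ≤ |V(G)| − α(G) + 1`, i.e. the polynomial
`f_{G,w} = α(G,w) − p_{G,w}` belongs to `H_{|V(G)| − α(G) + 1}`. -/
theorem handelman_rank_upper_bound {V : Type*} [Fintype V] [DecidableEq V]
    (G : SimpleGraph V) (w : V → ℝ) (W : V → V → ℝ) (hw : ∀ v, 0 ≤ w v)
    (hWs : ∀ i j, W i j = W j i)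
    (hW : ∀ i j, G.Adj i j → max (w i) (w j) ≤ W i j) :
    InHandelman (Fintype.card V - alphaNat G + 1) (C (alphaW G w) - pGW G w W) :=
  handelman_rank_upper_bound_general G w W hw hW
end
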